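/- Let R ≥ 1/2, let λ be a Borel probability measure with supp λ ⊆ D̄_R = {z : |z| ≤ R} and E(λ) < +∞, and let Σ ⊆ D̄_R be a nonempty compact set whose Robin constant satisfies γ(Σ) > 0. Then λ(Σ)² ≤ (E(λ) + 2 log(2R)) / γ(Σ). -/

import Mathlib

open MeasureTheory Metric Filter Topology
open scoped ENNReal

/-- Logarithmic potential of a measure on ℂ. -/
noncomputable def logPot (μ : Measure ℂ) (z : ℂ) : ℝ := ∫ x, Real.log (1 / ‖z - x‖) ∂μ

/-- Mutual logarithmic energy of two measures on ℂ. -/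
noncomputable def mutualEnergy (μ ν : Measure ℂ) : ℝ := ∫ x, logPot ν x ∂μ

/-- Logarithmic energy of a measure on ℂ. -/
noncomputable def energy (μ : Measure ℂ) : ℝ := mutualEnergy μ μ

/-- The logarithmic kernel is in `L¹(μ ⊗ μ)`, i.e. `E(μ) < +∞`. -/
def FiniteEnergy (μ : Measure ℂ) : Prop :=
  (∫⁻ x, ∫⁻ y, ENNReal.ofReal (Real.log (1 / ‖x - y‖)) ∂μ ∂μ) < ⊤ ∧
  (∫⁻ x, ∫⁻ y, ENNReal.ofReal (-Real.log (1 / ‖x - y‖)) ∂μ ∂μ) < ⊤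

/-- Weighted (total) energy in the external field φ. -/
noncomputable def wEnergy (φ : ℂ → ℝ) (μ : Measure ℂ) : ℝ := energy μ + 2 * ∫ z, φ z ∂μ

/-- The admissible class M(K, φ). -/
def AdmM (K : Set ℂ) (φ : ℂ → ℝ) : Set (Measure ℂ) :=
  {μ | IsProbabilityMeasure μ ∧ μ Kᶜ = 0 ∧ FiniteEnergy μ ∧ Integrable φ μ}

/-- Equilibrium energy E_φ[K]. -/
noncomputable def eqEnergy (φ : ℂ → ℝ) (K : Set ℂ) : ℝ := sInf (wEnergy φ '' AdmM K φ)

/-- Robin constant of a set, in (−∞, +∞]. -/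
noncomputable def robin (K : Set ℂ) : EReal :=
  sInf ((fun μ : Measure ℂ => ((energy μ : ℝ) : EReal)) ''
    {μ : Measure ℂ | IsProbabilityMeasure μ ∧ μ Kᶜ = 0 ∧ FiniteEnergy μ})

/-- Logarithmic capacity cap K = exp(−γ(K)). -/
noncomputable def cap (K : Set ℂ) : ℝ :=
  if robin K = ⊤ then 0 else Real.exp (-(robin K).toReal)

/-- K carries a probability measure of finite logarithmic energy. -/
def PosCap (K : Set ℂ) : Prop :=
  ∃ μ : Measure ℂ, IsProbabilityMeasure μ ∧ μ Kᶜ = 0 ∧ FiniteEnergy μ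

/-- Compact nonempty subsets of ℂ with at most s connected components and positive capacity. -/
def Ks (s : ℕ) : Set (Set ℂ) :=
  {K | IsCompact K ∧ K.Nonempty ∧ Finite (ConnectedComponents ↥K) ∧
       Nat.card (ConnectedComponents ↥K) ≤ s ∧ PosCap K}

/-!
Normalising `λ|_Σ` gives a probability measure on `Σ`, whence `λ(Σ)² γ(Σ) ≤ E(λ|_Σ)`. On the disc
`D̄_R` the kernel `log (1/|x - y|)` is bounded below by `-log (2R) ≤ 0`, so once shifted by
`log (2R)` it becomes nonnegative and its integral is monotone in the measure:
`E(λ|_Σ) + log (2R) λ(Σ)² ≤ E(λ) + log (2R)`.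
-/

lemma integrable_of_lintegral_ofReal_lt_top {α : Type*} [MeasurableSpace α] {μ : Measure α}
    {f : α → ℝ} (hf : AEMeasurable f μ) (hpos : ∫⁻ a, ENNReal.ofReal (f a) ∂μ < ∞)
    (hneg : ∫⁻ a, ENNReal.ofReal (-f a) ∂μ < ∞) : Integrable f μ := by
  have h₁ := integrable_toReal_of_lintegral_ne_top hf.ennreal_ofReal hpos.ne
  have h₂ := integrable_toReal_of_lintegral_ne_top hf.neg.ennreal_ofReal hneg.ne
  refine (h₁.sub h₂).congr (Eventually.of_forall fun a => ?_)
  simp [ENNReal.toReal_ofReal']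

noncomputable def logKernel (p : ℂ × ℂ) : ℝ := Real.log (1 / ‖p.1 - p.2‖)

lemma measurable_logKernel : Measurable logKernel := by
  unfold logKernel
  fun_prop

lemma neg_log_le_logKernel {R : ℝ} (hR : 1 ≤ 2 * R) {p : ℂ × ℂ}
    (hp : p ∈ closedBall (0 : ℂ) R ×ˢ closedBall (0 : ℂ) R) :
    -Real.log (2 * R) ≤ logKernel p := by
  obtain ⟨hx, hy⟩ := hp
  rw [mem_closedBall_zero_iff] at hx hy
  rw [logKernel, one_div, Real.log_inv, neg_le_neg_iff]
  rcases (norm_nonneg (p.1 - p.2)).eq_or_lt with h0 | h0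
  · rw [← h0, Real.log_zero]
    exact Real.log_nonneg hR
  · exact Real.log_le_log h0 ((norm_sub_le _ _).trans (by linarith))

lemma ae_neg_log_le_logKernel {R : ℝ} (hR : 1 ≤ 2 * R) {μ : Measure ℂ} [SFinite μ]
    (hμ : μ (closedBall (0 : ℂ) R)ᶜ = 0) :
    ∀ᵐ p ∂μ.prod μ, -Real.log (2 * R) ≤ logKernel p := by
  have hball : ∀ᵐ x ∂μ, x ∈ closedBall (0 : ℂ) R := ae_iff.2 hμ
  have hprod : ∀ᵐ p ∂μ.prod μ, p ∈ closedBall (0 : ℂ) R ×ˢ closedBall (0 : ℂ) R := by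
    rw [Measure.ae_prod_mem_iff_ae_ae_mem (measurableSet_closedBall.prod measurableSet_closedBall)]
    filter_upwards [hball] with x hx
    filter_upwards [hball] with y hy using ⟨hx, hy⟩
  filter_upwards [hprod] with p hp using neg_log_le_logKernel hR hp

namespace FiniteEnergy

variable {μ ν : Measure ℂ}

lemma mono (hμν : μ ≤ ν) (h : FiniteEnergy ν) : FiniteEnergy μ :=
  ⟨(lintegral_mono' hμν fun _ => lintegral_mono' hμν le_rfl).trans_lt h.1,
    (lintegral_mono' hμν fun _ => lintegral_mono' hμν le_rfl).trans_lt h.2⟩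

lemma smul {c : ℝ≥0∞} (hc : c ≠ ∞) (h : FiniteEnergy μ) : FiniteEnergy (c • μ) := by
  simp only [FiniteEnergy, lintegral_smul_measure, smul_eq_mul, lintegral_const_mul' _ _ hc]
  exact ⟨ENNReal.mul_lt_top hc.lt_top (ENNReal.mul_lt_top hc.lt_top h.1),
    ENNReal.mul_lt_top hc.lt_top (ENNReal.mul_lt_top hc.lt_top h.2)⟩

lemma integrable_logKernel [SFinite μ] (h : FiniteEnergy μ) : Integrable logKernel (μ.prod μ) := by
  refine integrable_of_lintegral_ofReal_lt_top measurable_logKernel.aemeasurable ?_ ?_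
  · rw [lintegral_prod _ measurable_logKernel.ennreal_ofReal.aemeasurable]
    exact h.1
  · rw [lintegral_prod (fun p => ENNReal.ofReal (-logKernel p))
      measurable_logKernel.neg.ennreal_ofReal.aemeasurable]
    exact h.2

lemma energy_eq_integral_logKernel [SFinite μ] (h : FiniteEnergy μ) :
    energy μ = ∫ p, logKernel p ∂μ.prod μ :=
  (integral_prod _ h.integrable_logKernel).symm

lemma energy_add_mul_sq_eq_integral [IsFiniteMeasure μ] (h : FiniteEnergy μ) (c : ℝ) :
    energy μ + c * (μ Set.univ).toReal ^ 2 = ∫ p, (logKernel p + c) ∂μ.prod μ := by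
  rw [integral_add h.integrable_logKernel (integrable_const c), integral_const,
    h.energy_eq_integral_logKernel, smul_eq_mul, Measure.real, ← Set.univ_prod_univ,
    Measure.prod_prod, ENNReal.toReal_mul]
  ring

end FiniteEnergy

lemma energy_zero : energy 0 = 0 := by
  simp [energy, mutualEnergy]

lemma energy_smul (c : ℝ≥0∞) (μ : Measure ℂ) : energy (c • μ) = c.toReal ^ 2 * energy μ := by
  simp only [energy, mutualEnergy, logPot, integral_smul_measure, smul_eq_mul, integral_const_mul]
  ring

lemma sq_measure_univ_mul_robin_le_energy {μ : Measure ℂ} [IsFiniteMeasure μ] {S : Set ℂ}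
    (hS : μ Sᶜ = 0) (hE : FiniteEnergy μ) :
    (((μ Set.univ).toReal ^ 2 : ℝ) : EReal) * robin S ≤ energy μ := by
  rcases eq_or_ne μ 0 with rfl | hμ
  · simp [energy_zero]
  set m := μ Set.univ
  have hm : m ≠ 0 := Measure.measure_univ_ne_zero.2 hμ
  have hprob : IsProbabilityMeasure (m⁻¹ • μ) :=
    ⟨by rw [Measure.smul_apply, smul_eq_mul, ENNReal.inv_mul_cancel hm (measure_ne_top μ _)]⟩
  have hrobin : robin S ≤ energy (m⁻¹ • μ) :=
    sInf_le ⟨_, ⟨hprob, by simp [hS], hE.smul (ENNReal.inv_ne_top.2 hm)⟩, rfl⟩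
  have hmass : m.toReal ^ 2 * (m⁻¹).toReal ^ 2 = 1 := by
    have hm' : m.toReal ≠ 0 := ENNReal.toReal_ne_zero.2 ⟨hm, measure_ne_top μ _⟩
    rw [ENNReal.toReal_inv, ← mul_pow, mul_inv_cancel₀ hm', one_pow]
  calc ((m.toReal ^ 2 : ℝ) : EReal) * robin S
        ≤ ((m.toReal ^ 2 : ℝ) : EReal) * energy (m⁻¹ • μ) :=
        mul_le_mul_of_nonneg_left hrobin (EReal.coe_nonneg.2 (sq_nonneg _))
    _ = energy μ := by
        rw [← EReal.coe_mul, energy_smul, ← mul_assoc, hmass, one_mul]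

lemma energy_add_mul_sq_le_of_le {μ ν : Measure ℂ} [IsFiniteMeasure ν] (hμν : μ ≤ ν)
    (hE : FiniteEnergy ν) {c : ℝ} (hk : ∀ᵐ p ∂ν.prod ν, -c ≤ logKernel p) :
    energy μ + c * (μ Set.univ).toReal ^ 2 ≤ energy ν + c * (ν Set.univ).toReal ^ 2 := by
  have : IsFiniteMeasure μ := isFiniteMeasure_of_le ν hμν
  rw [(hE.mono hμν).energy_add_mul_sq_eq_integral, hE.energy_add_mul_sq_eq_integral]
  exact integral_mono_measure (Measure.prod_mono hμν hμν)
    (hk.mono fun p hp => by simp only [Pi.zero_apply]; linarith)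
    (hE.integrable_logKernel.add (integrable_const c))

theorem stmt18_general (R : ℝ) (hR : 1 / 2 ≤ R)
    (lam : Measure ℂ) (hP : IsProbabilityMeasure lam)
    (hsupp : lam (closedBall (0 : ℂ) R)ᶜ = 0) (hE : FiniteEnergy lam)
    (S : Set ℂ) (hSc : IsCompact S) :
    (((lam S).toReal ^ 2 : ℝ) : EReal) * robin S ≤
      ((energy lam + 2 * Real.log (2 * R) : ℝ) : EReal) := by
  have hR' : 1 ≤ 2 * R := by linarith
  have hrestrict : lam.restrict S ≤ lam := Measure.restrict_le_self
  have hmono := energy_add_mul_sq_le_of_le hrestrict hE (ae_neg_log_le_logKernel hR' hsupp)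
  rw [Measure.restrict_apply_univ, measure_univ, ENNReal.toReal_one] at hmono
  have hrobin := sq_measure_univ_mul_robin_le_energy (μ := lam.restrict S) (S := S)
    (by rw [Measure.restrict_apply' hSc.measurableSet, Set.compl_inter_self, measure_empty])
    (hE.mono hrestrict)
  rw [Measure.restrict_apply_univ] at hrobin
  refine hrobin.trans (EReal.coe_le_coe_iff.2 ?_)
  nlinarith [Real.log_nonneg hR', sq_nonneg (lam S).toReal]

theorem stmt18 (R : ℝ) (hR : 1 / 2 ≤ R)
    (lam : Measure ℂ) (hP : IsProbabilityMeasure lam)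
    (hsupp : lam (closedBall (0 : ℂ) R)ᶜ = 0) (hE : FiniteEnergy lam)
    (S : Set ℂ) (hSc : IsCompact S) (hSne : S.Nonempty)
    (hSb : S ⊆ closedBall (0 : ℂ) R)
    (hγ : 0 < robin S) :
    (((lam S).toReal ^ 2 : ℝ) : EReal) * robin S ≤
      ((energy lam + 2 * Real.log (2 * R) : ℝ) : EReal) :=
  stmt18_general R hR lam hP hsupp hE S hSc
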